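/- If G is a finitely presented group containing a finitely generated submonoid with undecidable membership problem, then the free product G ∗ ℤ admits a finite group generating set A such that membership in the submonoid of G ∗ ℤ generated by A (i.e., the positivity problem: deciding whether an element can be written as a positive word over A) is undecidable. -/

import Mathlib

open Monoid

/-- Evaluation of a word over the generators `gens` (with `true` = generator,
`false` = inverse) in the group `G`. -/
def evalWord {G : Type*} [Group G] {n : ℕ} (gens : Fin n → G)
    (w : List (Fin n × Bool)) : G :=
  (w.map (fun p => if p.2 then gens p.1 else (gens p.1)⁻¹)).prod

/-
Let `t` generate the `ℤ` factor and put `A = {x t, t s t⁻¹, t}`, where `x` runs over the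
generators of `G` and `s` over those of a submonoid `M ≤ G` with undecidable membership.
Every element of `A` has nonnegative `t`-exponent sum and only the `t s t⁻¹` have exponent
sum zero, so the elements of exponent sum zero in the monoid generated by `A` are exactly
`t M t⁻¹`. A word for `t g t⁻¹` over `A` is computed letter by letter from a word for `g`
over the `x`, hence a decision procedure for the positivity problem of `A` would decide
membership in `M`.
-/

open Coprod

theorem Submonoid.mem_closure_inter_mker_of_one_le {M N : Type*} [Monoid M] [CommMonoid N]
    [PartialOrder N] [IsOrderedMonoid N] (φ : M →* N) {s : Set M} (hs : ∀ x ∈ s, 1 ≤ φ x)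
    {x : M} (hx : x ∈ closure s) (hφx : φ x = 1) : x ∈ closure (s ∩ MonoidHom.mker φ) := by
  suffices ∀ x ∈ closure s, 1 ≤ φ x ∧ (φ x = 1 → x ∈ closure (s ∩ MonoidHom.mker φ)) from
    (this x hx).2 hφx
  intro x hx
  induction hx using closure_induction with
  | mem x hx => exact ⟨hs x hx, fun h => subset_closure ⟨hx, h⟩⟩
  | one => exact ⟨(map_one φ).ge, fun _ => one_mem _⟩
  | mul x y _ _ hx hy =>
    refine ⟨map_mul φ x y ▸ one_le_mul hx.1 hy.1, fun h => ?_⟩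
    rw [map_mul, mul_eq_one_iff_of_one_le hx.1 hy.1] at h
    exact mul_mem (hx.2 h.1) (hy.2 h.2)

section Words

variable {G H : Type*} [Group G] [Group H] {n m : ℕ}

theorem evalWord_nil (B : Fin m → H) : evalWord B [] = 1 := rfl

theorem evalWord_cons (B : Fin m → H) (p : Fin m × Bool) (w : List (Fin m × Bool)) :
    evalWord B (p :: w) = (if p.2 then B p.1 else (B p.1)⁻¹) * evalWord B w :=
  List.prod_cons

theorem evalWord_append (B : Fin m → H) (w v : List (Fin m × Bool)) :
    evalWord B (w ++ v) = evalWord B w * evalWord B v := by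
  simp [evalWord]

def invWord (u : List (Fin m × Bool)) : List (Fin m × Bool) :=
  (u.map fun p => (p.1, !p.2)).reverse

theorem evalWord_invWord (B : Fin m → H) (u : List (Fin m × Bool)) :
    evalWord B (invWord u) = (evalWord B u)⁻¹ := by
  rw [evalWord, evalWord, List.prod_inv_reverse, invWord, List.map_reverse, List.map_map,
    List.map_map]
  congr 3
  funext ⟨i, b⟩
  cases b <;> simp

def substWord (u : Fin n → List (Fin m × Bool)) (w : List (Fin n × Bool)) :
    List (Fin m × Bool) :=
  w.flatMap fun p => if p.2 then u p.1 else invWord (u p.1)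

theorem evalWord_substWord (X : Fin n → G) (B : Fin m → H) (φ : G →* H)
    {u : Fin n → List (Fin m × Bool)} (hu : ∀ i, evalWord B (u i) = φ (X i))
    (w : List (Fin n × Bool)) : evalWord B (substWord u w) = φ (evalWord X w) := by
  induction w with
  | nil => simp [substWord, evalWord]
  | cons p w ih =>
    rw [substWord, List.flatMap_cons, evalWord_append, ← substWord, ih, evalWord_cons, map_mul]
    split_ifs <;> simp [evalWord_invWord, hu]

theorem computable_substWord (u : Fin n → List (Fin m × Bool)) : Computable (substWord u) :=
  have hletter := Primrec.dom_finite fun p : Fin n × Bool =>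
    if p.2 then u p.1 else invWord (u p.1)
  (Primrec.list_flatMap Primrec.id (hletter.comp Primrec.snd).to₂).to_comp

end Words

namespace PositivityReduction

variable {G : Type*} [Group G]

def t (G : Type*) [Group G] : G ∗ Multiplicative ℤ := inr (Multiplicative.ofAdd 1)

def conjInl : G →* G ∗ Multiplicative ℤ := (MulAut.conj (t G)).toMonoidHom.comp inl

theorem conjInl_apply (g : G) : conjInl g = t G * inl g * (t G)⁻¹ := rfl

theorem conjInl_injective : Function.Injective (conjInl : G →* G ∗ Multiplicative ℤ) :=
  (MulAut.conj (t G)).injective.comp inl_injective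

def gens {n k : ℕ} (X : Fin n → G) (S : Fin k → G) : Fin (n + k + 1) → G ∗ Multiplicative ℤ :=
  Fin.snoc (Fin.append (fun i => inl (X i) * t G) (fun j => conjInl (S j))) (t G)

variable {n k : ℕ} (X : Fin n → G) (S : Fin k → G)

theorem gens_castAdd (i : Fin n) :
    gens X S (Fin.castAdd k i).castSucc = inl (X i) * t G := by
  simp [gens]

theorem gens_natAdd (j : Fin k) : gens X S (Fin.natAdd n j).castSucc = conjInl (S j) := by
  simp only [gens, Fin.snoc_castSucc, Fin.append_right]

theorem gens_last : gens X S (Fin.last _) = t G := by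
  simp [gens]

theorem one_lt_snd_t : 1 < snd (t G) :=
  show (1 : Multiplicative ℤ) < Multiplicative.ofAdd 1 by decide

theorem one_le_snd_gens (i : Fin (n + k + 1)) : 1 ≤ snd (gens X S i) := by
  induction i using Fin.lastCases with
  | last => simpa [gens_last] using one_lt_snd_t.le
  | cast i =>
    induction i using Fin.addCases with
    | left i => simpa [gens_castAdd] using one_lt_snd_t.le
    | right j => rw [gens_natAdd]; simp [conjInl_apply]

theorem range_gens_inter_mker_subset :
    Set.range (gens X S) ∩ MonoidHom.mker (snd : G ∗ Multiplicative ℤ →* _) ⊆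
      conjInl '' Set.range S := by
  rintro _ ⟨⟨i, rfl⟩, hi⟩
  induction i using Fin.lastCases with
  | last => exact absurd (by simpa [gens_last] using hi) one_lt_snd_t.ne'
  | cast i =>
    induction i using Fin.addCases with
    | left i => exact absurd (by simpa [gens_castAdd] using hi) one_lt_snd_t.ne'
    | right j => exact ⟨S j, ⟨j, rfl⟩, (gens_natAdd X S j).symm⟩

theorem conjInl_mem_closure_gens_iff (g : G) :
    conjInl g ∈ Submonoid.closure (Set.range (gens X S)) ↔
      g ∈ Submonoid.closure (Set.range S) := by
  rw [← Submonoid.mem_map_iff_mem (S := Submonoid.closure (Set.range S)) conjInl_injective,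
    MonoidHom.map_mclosure]
  constructor
  · intro hg
    refine Submonoid.closure_mono (range_gens_inter_mker_subset X S) ?_
    refine Submonoid.mem_closure_inter_mker_of_one_le snd
      (Set.forall_mem_range.2 (one_le_snd_gens X S)) hg ?_
    simp [conjInl_apply]
  · have hsub : conjInl '' Set.range S ⊆ Set.range (gens X S) := by
      rintro _ ⟨_, ⟨j, rfl⟩, rfl⟩
      exact ⟨_, gens_natAdd X S j⟩
    exact (Submonoid.closure_mono hsub ·)

theorem closure_gens_eq_top (hgen : Subgroup.closure (Set.range X) = ⊤) :
    Subgroup.closure (Set.range (gens X S)) = ⊤ := by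
  set K := Subgroup.closure (Set.range (gens X S))
  have ht : t G ∈ K := Subgroup.subset_closure ⟨_, gens_last X S⟩
  have hinl : (inl : G →* G ∗ Multiplicative ℤ).range ≤ K := by
    rw [MonoidHom.range_eq_map, ← hgen, MonoidHom.map_closure, Subgroup.closure_le]
    rintro _ ⟨_, ⟨i, rfl⟩, rfl⟩
    have hxt : inl (X i) * t G ∈ K := Subgroup.subset_closure ⟨_, gens_castAdd X S i⟩
    simpa using mul_mem hxt (inv_mem ht)
  have hinr : (inr : Multiplicative ℤ →* G ∗ Multiplicative ℤ).range ≤ K := by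
    rintro _ ⟨z, rfl⟩
    have : inr z = t G ^ Multiplicative.toAdd z := by
      rw [t, ← map_zpow, ← ofAdd_zsmul, smul_eq_mul, mul_one, ofAdd_toAdd]
    exact this ▸ zpow_mem ht _
  rw [eq_top_iff, ← range_inl_sup_range_inr]
  exact sup_le hinl hinr

/-- `t x t⁻¹ = t · (x t) · t⁻¹ · t⁻¹` as a word over `gens X S`. -/
def conjInlWord (n k : ℕ) (i : Fin n) : List (Fin (n + k + 1) × Bool) :=
  [(Fin.last _, true), ((Fin.castAdd k i).castSucc, true), (Fin.last _, false),
    (Fin.last _, false)]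

theorem evalWord_conjInlWord (i : Fin n) :
    evalWord (gens X S) (conjInlWord n k i) = conjInl (X i) := by
  simp only [conjInlWord, evalWord_cons, evalWord_nil, gens_last, gens_castAdd, conjInl_apply,
    ↓reduceIte, Bool.false_eq_true]
  group

end PositivityReduction

open PositivityReduction in
theorem stmt11_general {G : Type*} [Group G]
    {n : ℕ} (X : Fin n → G) (hgen : Subgroup.closure (Set.range X) = ⊤)
    (hund : ∃ (k : ℕ) (S : Fin k → G),
      ¬ ComputablePred fun w : List (Fin n × Bool) =>
          evalWord X w ∈ Submonoid.closure (Set.range S)) :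
    ∃ (m : ℕ) (A : Fin m → Coprod G (Multiplicative ℤ)),
      Subgroup.closure (Set.range A) = ⊤ ∧
      ¬ ComputablePred fun w : List (Fin m × Bool) =>
          evalWord A w ∈ Submonoid.closure (Set.range A) := by
  obtain ⟨k, S, hS⟩ := hund
  refine ⟨n + k + 1, gens X S, closure_gens_eq_top X S hgen, fun hA => hS ?_⟩
  refine ComputablePred.computable_of_manyOneReducible
    ⟨substWord (conjInlWord n k), computable_substWord _, fun w => ?_⟩ hA
  rw [evalWord_substWord X (gens X S) conjInl (evalWord_conjInlWord X S),
    conjInl_mem_closure_gens_iff]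

/-- If `G` is a finitely presented group containing a finitely generated
submonoid with undecidable membership problem, then the free product `G ∗ ℤ` admits a
finite group generating set `A` such that membership in the submonoid generated by `A`
(the positivity problem for `A`) is undecidable. -/
theorem stmt11 {G : Type*} [Group G]
    (hfp : ∃ (p : ℕ) (rels : Finset (FreeGroup (Fin p))),
      Nonempty (G ≃* PresentedGroup (rels : Set (FreeGroup (Fin p)))))
    {n : ℕ} (X : Fin n → G) (hgen : Subgroup.closure (Set.range X) = ⊤)
    (hund : ∃ (k : ℕ) (S : Fin k → G),
      ¬ ComputablePred fun w : List (Fin n × Bool) =>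
          evalWord X w ∈ Submonoid.closure (Set.range S)) :
    ∃ (m : ℕ) (A : Fin m → Coprod G (Multiplicative ℤ)),
      Subgroup.closure (Set.range A) = ⊤ ∧
      ¬ ComputablePred fun w : List (Fin m × Bool) =>
          evalWord A w ∈ Submonoid.closure (Set.range A) :=
  stmt11_general X hgen hund
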